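/- arXiv:1402.6981 — 2 statements merged into one kernel-verified Lean document; each statement's English description precedes it below -/
import Mathlib

section
/- With the partition block decomposition of so(d), the subspace m of block-off-diagonal skew matrices is a Lie subalgebra (i.e., [m,m] ⊆ m) if and only if every block has size 1 (κ_i = 1 for all i), in which case [m,m] = 0 is false in general but the diagonal blocks of any commutator [X,Y] with X,Y ∈ m vanish. -/
/-!
For skew-symmetric `X` and `Y` one has `(X * Y)ᵀ = Y * X`, so every diagonal entry of
`[X, Y]` vanishes; when all blocks have size one the diagonal blocks are exactly the
diagonal entries. Conversely, if block `i` has two indices `u ≠ u'` and `v` lies in another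
block, the skew elementary matrices `E_{uv} - E_{vu}` and `E_{u'v} - E_{vu'}` are
block-off-diagonal, and the `(u, u')` entry of their commutator is `-1`.
-/

open Matrix

namespace Matrix

variable {n R : Type*}

theorem commutator_apply_self_eq_zero_of_transpose_eq_neg [Fintype n] [CommRing R]
    {X Y : Matrix n n R} (hX : Xᵀ = -X) (hY : Yᵀ = -Y) (p : n) :
    (X * Y - Y * X) p p = 0 := by
  rw [sub_apply, sub_eq_zero, ← transpose_apply (X * Y), transpose_mul, hX, hY, neg_mul_neg]

variable [DecidableEq n] [Ring R]

variable (R) in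
def skewSingle (u v : n) : Matrix n n R :=
  single u v 1 - single v u 1

theorem transpose_skewSingle (u v : n) : (skewSingle R u v)ᵀ = -skewSingle R u v := by
  rw [skewSingle, transpose_sub, transpose_single, transpose_single, neg_sub]

theorem commutator_skewSingle_apply [Fintype n] {u u' v : n}
    (huv : u ≠ v) (hu'v : u' ≠ v) (huu' : u ≠ u') :
    (skewSingle R u v * skewSingle R u' v - skewSingle R u' v * skewSingle R u v) u u' = -1 := by
  simp [skewSingle, sub_mul, mul_sub, huv, hu'v.symm, huu', huu'.symm, huv.symm]

variable {ι : Type*} {α : ι → Type*} [DecidableEq ι] [∀ i, DecidableEq (α i)]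

theorem skewSingle_apply_block_diag {u v : Σ i, α i}
    (huv : u.1 ≠ v.1) (k : ι) (a b : α k) : skewSingle R u v ⟨k, a⟩ ⟨k, b⟩ = 0 := by
  rw [skewSingle, sub_apply, single_apply_of_ne, single_apply_of_ne, sub_zero] <;>
    exact fun ⟨hu, hv⟩ => huv (by rw [hu, hv])

theorem exists_blockOffDiag_skew_commutator_ne_zero [Fintype ι] [∀ i, Fintype (α i)]
    [Nontrivial R] {i j : ι} (hij : i ≠ j) {a₀ a₁ : α i} (ha : a₀ ≠ a₁) (c : α j) :
    ∃ X Y : Matrix (Σ i, α i) (Σ i, α i) R, Xᵀ = -X ∧ (∀ k (a b : α k), X ⟨k, a⟩ ⟨k, b⟩ = 0) ∧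
      Yᵀ = -Y ∧ (∀ k (a b : α k), Y ⟨k, a⟩ ⟨k, b⟩ = 0) ∧ (X * Y - Y * X) ⟨i, a₀⟩ ⟨i, a₁⟩ ≠ 0 := by
  have huu' : (⟨i, a₀⟩ : Σ i, α i) ≠ ⟨i, a₁⟩ := by simpa using ha
  refine ⟨skewSingle R ⟨i, a₀⟩ ⟨j, c⟩, skewSingle R ⟨i, a₁⟩ ⟨j, c⟩,
    transpose_skewSingle _ _, skewSingle_apply_block_diag hij,
    transpose_skewSingle _ _, skewSingle_apply_block_diag hij, ?_⟩
  rw [commutator_skewSingle_apply (fun h => hij (congrArg Sigma.fst h))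
    (fun h => hij (congrArg Sigma.fst h)) huu']
  exact neg_ne_zero.mpr one_ne_zero

end Matrix

/-- With the partition block decomposition of `so(d)`, `r ≥ 2`, the diagonal blocks of
`[X, Y]` vanish for all `X, Y` in the block-off-diagonal subspace `m` if and only if
every block has size `1` (`κ i = 1` for all `i`). -/
theorem stmt_11 (r : ℕ) (hr : 2 ≤ r) (κ : Fin r → ℕ) (hκ : ∀ i, 1 ≤ κ i) :
    (∀ X Y : Matrix ((i : Fin r) × Fin (κ i)) ((i : Fin r) × Fin (κ i)) ℝ,
      Xᵀ = -X →
      (∀ (i : Fin r) (a b : Fin (κ i)), X ⟨i, a⟩ ⟨i, b⟩ = 0) →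
      Yᵀ = -Y →
      (∀ (i : Fin r) (a b : Fin (κ i)), Y ⟨i, a⟩ ⟨i, b⟩ = 0) →
      ∀ (i : Fin r) (a b : Fin (κ i)), (X * Y - Y * X) ⟨i, a⟩ ⟨i, b⟩ = 0)
      ↔ ∀ i, κ i = 1 := by
  constructor
  · intro h i
    by_contra hi
    have hκi : 2 ≤ κ i := by have := hκ i; omega
    have : Nontrivial (Fin r) := Fin.nontrivial_iff_two_le.mpr hr
    obtain ⟨j, hji⟩ := exists_ne i
    have hj : 0 < κ j := hκ j
    obtain ⟨X, Y, hXt, hXd, hYt, hYd, hne⟩ := exists_blockOffDiag_skew_commutator_ne_zero (R := ℝ)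
      (α := fun k => Fin (κ k)) hji.symm (a₀ := ⟨0, by omega⟩) (a₁ := ⟨1, hκi⟩) (by simp) ⟨0, hj⟩
    exact hne (h X Y hXt hXd hYt hYd _ _ _)
  · intro hk X Y hXt _ hYt _ i a b
    have : Subsingleton (Fin (κ i)) := by rw [hk i]; infer_instance
    rw [Subsingleton.elim a b]
    exact commutator_apply_self_eq_zero_of_transpose_eq_neg hXt hYt _
end

section
/- If X is a tangent vector to G at g and ω is a connection on G/H (equivariant consistent g-valued one-form), then θ_g(X) := g⁻¹·X − g⁻¹·ω_{[g]}([X])·g lies in the isotropy subalgebra h, where [·] denotes the projections G → G/H and TG → T(G/H). -/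
open Matrix

/-! Consistency of `ω` makes `ξ - ω_{[g]}(ξ·[g])` act trivially at `[g]`, and equivariance of the
infinitesimal action, applied with `g⁻¹`, carries the isotropy algebra of `[g] = g • o` onto that
of `o` by conjugation. -/

section Isotropy

variable {R A M E : Type*} [CommRing R] [Ring A] [Module R A] [AddCommGroup E] [Module R E]

def isotropy (inf : A →ₗ[R] (M → E)) (x : M) : Submodule R A :=
  LinearMap.ker ((LinearMap.proj (φ := fun _ : M => E) x).comp inf)

@[simp]
theorem mem_isotropy {inf : A →ₗ[R] (M → E)} {x : M} {η : A} :
    η ∈ isotropy inf x ↔ inf η x = 0 :=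
  Iff.rfl

theorem sub_connection_mem_isotropy {inf : A →ₗ[R] (M → E)} {ω : M → (E →ₗ[R] A)}
    (hcons : ∀ (x : M) (v : E), inf (ω x v) x = v) (x : M) (ξ : A) :
    ξ - ω x (inf ξ x) ∈ isotropy inf x := by
  simp [hcons]

theorem units_inv_mul_mul_mem_isotropy [MulAction Aˣ M] {inf : A →ₗ[R] (M → E)}
    {T : Aˣ → M → (E ≃ₗ[R] E)}
    (hequiv : ∀ (g : Aˣ) (ξ : A) (x : M), inf (↑g * ξ * ↑g⁻¹) (g • x) = T g x (inf ξ x))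
    (g : Aˣ) {x : M} {ζ : A} (hζ : ζ ∈ isotropy inf (g • x)) :
    ↑g⁻¹ * ζ * ↑g ∈ isotropy inf x := by
  rw [mem_isotropy] at hζ ⊢
  simpa [hζ] using hequiv g⁻¹ ζ (g • x)

end Isotropy

/-- For a tangent vector `X = ξ·g` to a matrix group `G` at `g`, and a connection `ω`
on `G/H` (a consistent `𝔤`-valued one-form), the element
`θ_g(X) = g⁻¹(ξ − ω_{[g]}([X]))g` lies in the isotropy algebra
`h = {η : η·o = 0}` of the origin.  Here `M = G/H` carries the `GL`-action, tangent
spaces of `M` are modelled by `E`, `T g x` is the (invertible) pushforward of the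
action of `g` at `x`, and `inf` is the infinitesimal action, which is equivariant:
`inf (g ξ g⁻¹) (g•x) = T g x (inf ξ x)`. -/
theorem stmt_19 {d : ℕ} {M E : Type*} [AddCommGroup E] [Module ℝ E]
    [MulAction (Matrix (Fin d) (Fin d) ℝ)ˣ M]
    (o : M)
    (T : (Matrix (Fin d) (Fin d) ℝ)ˣ → M → (E ≃ₗ[ℝ] E))
    (inf : Matrix (Fin d) (Fin d) ℝ →ₗ[ℝ] (M → E))
    (hequiv : ∀ (g : (Matrix (Fin d) (Fin d) ℝ)ˣ) (ξ : Matrix (Fin d) (Fin d) ℝ)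
      (x : M),
      inf ((↑g : Matrix (Fin d) (Fin d) ℝ) * ξ * (↑g⁻¹ : Matrix (Fin d) (Fin d) ℝ))
          (g • x)
        = T g x (inf ξ x))
    (ω : M → (E →ₗ[ℝ] Matrix (Fin d) (Fin d) ℝ))
    (hcons : ∀ (x : M) (v : E), inf (ω x v) x = v)
    (g : (Matrix (Fin d) (Fin d) ℝ)ˣ) (ξ : Matrix (Fin d) (Fin d) ℝ) :
    inf ((↑g⁻¹ : Matrix (Fin d) (Fin d) ℝ)
          * (ξ - ω (g • o) (inf ξ (g • o)))
          * (↑g : Matrix (Fin d) (Fin d) ℝ)) o = 0 :=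
  units_inv_mul_mul_mem_isotropy hequiv g (sub_connection_mem_isotropy hcons (g • o) ξ)
end
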